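/- Let T = (C_n, C_n, σ) be a tanglegram of size n ≥ 5 with both trees caterpillars with distance-to-root labelings {v_1,...,v_n} and {u_1,...,u_n}, and suppose v_k is matched to u_k for all 1 ≤ k ≤ m with m < n - 1 maximal (i.e., v_{m+1} is not matched to u_{m+1}). Then exactly m cards T - v_k u_k (1 ≤ k ≤ m) are pairwise isomorphic tanglegrams in which (with labels v'_j, u'_j for the card) v'_j is matched to u'_j for 1 ≤ j ≤ m-1 but v'_m is not matched to u'_m; in each of the remaining n - m cards, v'_j is matched to u'_j for all 1 ≤ j ≤ m. -/

import Mathlib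

/-- A rooted binary tree: every vertex has zero or two children. -/
inductive RBT : Type
  | leaf : RBT
  | node : RBT → RBT → RBT
deriving DecidableEq

namespace RBT
/-- Number of leaves. -/
def numLeaves : RBT → ℕ
  | leaf => 1
  | node l r => l.numLeaves + r.numLeaves

/-- Root-preserving isomorphism of rooted binary trees (children may be swapped). -/
inductive Iso : RBT → RBT → Prop
  | leaf : Iso leaf leaf
  | node {a b c d : RBT} : Iso a c → Iso b d → Iso (node a b) (node c d)
  | swap {a b c d : RBT} : Iso a d → Iso b c → Iso (node a b) (node c d)
end RBT

/-- A rooted binary tree with natural-number labels on its leaves. -/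
inductive LTree : Type
  | leaf : ℕ → LTree
  | node : LTree → LTree → LTree
deriving DecidableEq

namespace LTree

/-- The multiset of leaf labels. -/
def labels : LTree → Multiset ℕ
  | leaf a => {a}
  | node l r => l.labels + r.labels

/-- Relabel the leaves. -/
def map (f : ℕ → ℕ) : LTree → LTree
  | leaf a => leaf (f a)
  | node l r => node (map f l) (map f r)

/-- Forget the labels, obtaining a plain rooted binary tree. -/
def forget : LTree → RBT
  | leaf _ => .leaf
  | node l r => .node l.forget r.forget

/-- Delete the leaf (or leaves) with label `i`, suppressing the resulting degree-2 vertices;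
returns `none` if nothing is left. -/
def del (i : ℕ) : LTree → Option LTree
  | leaf a => if a = i then none else some (leaf a)
  | node l r =>
    match l.del i with
    | none => some r
    | some l' =>
      match r.del i with
      | none => some l'
      | some r' => some (node l' r')

/-- Label-preserving, root-preserving isomorphism of labeled trees (children may be swapped). -/
inductive LIso : LTree → LTree → Prop
  | leaf (a : ℕ) : LIso (leaf a) (leaf a)
  | node {a b c d : LTree} : LIso a c → LIso b d → LIso (node a b) (node c d)
  | swap {a b c d : LTree} : LIso a d → LIso b c → LIso (node a b) (node c d)

end LTree

/-- A tanglegram is modeled as a pair of labeled trees in which matched leaves carry the same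
label: the labels of the left tree are distinct and coincide (as a multiset) with the labels of
the right tree. -/
def IsTgl (p : LTree × LTree) : Prop := p.1.labels.Nodup ∧ p.1.labels = p.2.labels

/-- The size of a tanglegram: its number of matching edges. -/
def tglSize (p : LTree × LTree) : ℕ := Multiset.card p.1.labels

/-- Tanglegram isomorphism: a relabeling of the matching edges under which the left trees and
the right trees become isomorphic (mapping left root to left root and right root to right
root, and preserving the matching). -/
def TIso (p q : LTree × LTree) : Prop :=
  ∃ π : ℕ ≃ ℕ, LTree.LIso (p.1.map π) q.1 ∧ LTree.LIso (p.2.map π) q.2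

/-- The card of a tanglegram obtained by deleting the matched leaf pair with label `i`. -/
def tcard (p : LTree × LTree) (i : ℕ) : LTree × LTree :=
  ((p.1.del i).getD (.leaf 0), (p.2.del i).getD (.leaf 0))

/-- The multideck of a tanglegram: the multiset of cards obtained by deleting one matched leaf
pair in every possible way. -/
def tdeck (p : LTree × LTree) : Multiset (LTree × LTree) :=
  p.1.labels.map (fun i => tcard p i)

/-- `lcat k n` is the caterpillar on n leaves with a distance-to-root labeling whose labels are
k, k+1, ..., k+n-1 (label k+j-1 on the strippable leaf at distance j from the root). In
particular `lcat 1 n` is C_n with distance-to-root labeling v_1, ..., v_n. -/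
def lcat : ℕ → ℕ → LTree
  | k, 0 => .leaf k
  | k, 1 => .leaf k
  | k, n + 2 => .node (.leaf k) (lcat (k + 1) (n + 1))

/-- For a caterpillar-shaped labeled tree, the list of leaf labels in distance-to-root order:
entry j-1 (0-indexed) is the label of the leaf v_j of the distance-to-root labeling.
(Returns junk on non-caterpillar trees.) -/
def catList : LTree → List ℕ
  | .leaf a => [a]
  | .node (.leaf a) r => a :: catList r
  | .node l (.leaf a) => a :: catList l
  | .node _ _ => []

/-- In a card whose trees are caterpillars with distance-to-root labelings v'_1, …  and
u'_1, …, the leaf v'_j is matched to u'_j (both exist and carry the same matching label). -/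
def matchedAt (p : LTree × LTree) (j : ℕ) : Prop :=
  ∃ a, (catList p.1)[j - 1]? = some a ∧ (catList p.2)[j - 1]? = some a

/-!
A caterpillar is determined by the list of its leaf labels in distance-to-root order, and deleting
a leaf from it erases the label from that list. Here the left list is `1, …, n` and the right one
is `σ 1, …, σ n = 1, …, m, σ (m+1), …`. Deleting `k ≤ m` leaves two lists that agree in their first
`m - 1` entries and then differ (`m + 1` against `σ (m + 1)`); the transposition `(k k+1)` turns
card `k` into card `k + 1`, so these `m` cards are isomorphic. Deleting `i > m` keeps the common
prefix `1, …, m`.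
-/

namespace LTree

-- `ofList []` is junk; every lemma about `ofList` assumes a nonempty list.
def ofList : List ℕ → LTree
  | [] => leaf 0
  | [a] => leaf a
  | a :: b :: l => node (leaf a) (ofList (b :: l))

theorem ofList_cons (a : ℕ) {l : List ℕ} (hl : l ≠ []) :
    ofList (a :: l) = node (leaf a) (ofList l) := by
  cases l with
  | nil => exact absurd rfl hl
  | cons b t => rfl

theorem map_ofList (f : ℕ → ℕ) : ∀ {l : List ℕ}, l ≠ [] → (ofList l).map f = ofList (l.map f)
  | [a], _ => rfl
  | a :: b :: t, _ => by
    change node (leaf (f a)) ((ofList (b :: t)).map f) = _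
    rw [map_ofList f (List.cons_ne_nil b t)]
    rfl

theorem del_ofList (i : ℕ) : ∀ {l : List ℕ}, l.erase i ≠ [] →
    (ofList l).del i = some (ofList (l.erase i))
  | [], h => absurd rfl h
  | [a], h => by
    have hai : a ≠ i := by rintro rfl; simp at h
    simp [ofList, del, hai, List.erase_cons_tail]
  | a :: b :: t, h => by
    by_cases hai : a = i
    · subst hai
      simp [ofList, del]
    · rw [List.erase_cons_tail (by simpa using hai)] at h ⊢
      by_cases hbt : (b :: t).erase i = []
      · obtain ⟨rfl, rfl⟩ : b = i ∧ t = [] := by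
          rcases eq_or_ne b i with rfl | hbi
          · simpa using hbt
          · simp [List.erase_cons_tail, hbi] at hbt
        simp [ofList, del, hai]
      · rw [ofList_cons a hbt]
        simp [ofList, del, hai, del_ofList i hbt]

theorem map_map (f g : ℕ → ℕ) : ∀ t : LTree, (t.map g).map f = t.map (f ∘ g)
  | leaf _ => rfl
  | node l r => by simp only [map, map_map f g l, map_map f g r]

theorem map_id : ∀ t : LTree, t.map id = t
  | leaf _ => rfl
  | node l r => by simp only [map, map_id l, map_id r]

namespace LIso

protected theorem refl : ∀ t : LTree, LIso t t
  | LTree.leaf a => .leaf a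
  | LTree.node l r => .node (LIso.refl l) (LIso.refl r)

protected theorem symm {s t : LTree} (h : LIso s t) : LIso t s := by
  induction h with
  | leaf a => exact .leaf a
  | node _ _ ih₁ ih₂ => exact .node ih₁ ih₂
  | swap _ _ ih₁ ih₂ => exact .swap ih₂ ih₁

protected theorem trans {s t u : LTree} (h₁ : LIso s t) (h₂ : LIso t u) : LIso s u := by
  induction h₁ generalizing u with
  | leaf => exact h₂
  | node _ _ ih₁ ih₂ =>
    cases h₂ with
    | node h₃ h₄ => exact .node (ih₁ h₃) (ih₂ h₄)
    | swap h₃ h₄ => exact .swap (ih₁ h₃) (ih₂ h₄)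
  | swap _ _ ih₁ ih₂ =>
    cases h₂ with
    | node h₃ h₄ => exact .swap (ih₁ h₄) (ih₂ h₃)
    | swap h₃ h₄ => exact .node (ih₁ h₄) (ih₂ h₃)

theorem map (f : ℕ → ℕ) {s t : LTree} (h : LIso s t) : LIso (s.map f) (t.map f) := by
  induction h with
  | leaf a => exact .leaf (f a)
  | node _ _ ih₁ ih₂ => exact .node ih₁ ih₂
  | swap _ _ ih₁ ih₂ => exact .swap ih₁ ih₂

end LIso

end LTree

theorem catList_node_leaf (a : ℕ) (r : LTree) : catList (.node (.leaf a) r) = a :: catList r := by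
  cases r <;> rfl

theorem catList_ofList : ∀ {l : List ℕ}, l ≠ [] → catList (LTree.ofList l) = l
  | [_], _ => rfl
  | a :: b :: t, _ => by
    rw [LTree.ofList_cons a (List.cons_ne_nil b t), catList_node_leaf,
      catList_ofList (List.cons_ne_nil b t)]

theorem lcat_eq_ofList (k : ℕ) : ∀ {n : ℕ}, n ≠ 0 → lcat k n = LTree.ofList (List.range' k n)
  | 1, _ => rfl
  | n + 2, _ => by
    rw [List.range'_succ, LTree.ofList_cons _ (by simp), ← lcat_eq_ofList (k + 1) n.succ_ne_zero]
    rfl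

namespace TIso

theorem of_map_eq {p q : LTree × LTree} (π : ℕ ≃ ℕ) (h₁ : p.1.map π = q.1)
    (h₂ : p.2.map π = q.2) : TIso p q :=
  ⟨π, h₁ ▸ LTree.LIso.refl _, h₂ ▸ LTree.LIso.refl _⟩

protected theorem refl (p : LTree × LTree) : TIso p p :=
  of_map_eq (Equiv.refl ℕ) (LTree.map_id _) (LTree.map_id _)

protected theorem symm {p q : LTree × LTree} : TIso p q → TIso q p := by
  rintro ⟨π, h₁, h₂⟩
  have cancel (t : LTree) : (t.map π).map π.symm = t := by
    rw [LTree.map_map, π.symm_comp_self, LTree.map_id]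
  exact ⟨π.symm, cancel p.1 ▸ (h₁.map π.symm).symm, cancel p.2 ▸ (h₂.map π.symm).symm⟩

protected theorem trans {p q r : LTree × LTree} : TIso p q → TIso q r → TIso p r := by
  rintro ⟨π, h₁, h₂⟩ ⟨ρ, h₃, h₄⟩
  exact ⟨π.trans ρ, by simpa [LTree.map_map] using (h₁.map ρ).trans h₃,
    by simpa [LTree.map_map] using (h₂.map ρ).trans h₄⟩

end TIso

theorem List.erase_ne_nil_of_two_le_length {α : Type*} [DecidableEq α] {l : List α} (a : α)
    (hl : 2 ≤ l.length) : l.erase a ≠ [] := by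
  rw [← List.length_pos_iff, List.length_erase]
  split <;> omega

theorem List.map_swap_erase_of_infix {α : Type*} [DecidableEq α] {l : List α} {a b : α}
    (hl : l.Nodup) (h : [a, b] <:+: l) : (l.erase a).map (Equiv.swap a b) = l.erase b := by
  obtain ⟨s, t, rfl⟩ := h
  simp only [List.append_assoc, List.cons_append, List.nil_append, List.nodup_append,
    List.nodup_cons, List.mem_cons, not_or] at hl
  obtain ⟨-, ⟨⟨hab, hat⟩, hbt, -⟩, hs⟩ := hl
  have has : a ∉ s := fun h => hs a h a (.inl rfl) rfl
  have hbs : b ∉ s := fun h => hs b h b (.inr (.inl rfl)) rfl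
  have fix : ∀ l : List α, a ∉ l → b ∉ l → l.map (Equiv.swap a b) = l := fun l ha hb =>
    (List.map_congr_left fun x hx => Equiv.swap_apply_of_ne_of_ne (ne_of_mem_of_not_mem hx ha)
      (ne_of_mem_of_not_mem hx hb)).trans (List.map_id l)
  simp only [List.append_assoc, List.cons_append, List.nil_append,
    List.erase_append_right _ has, List.erase_append_right _ hbs, List.erase_cons_head,
    List.erase_cons_tail (a := b) (b := a) (by simpa using hab), List.map_append, List.map_cons,
    fix s has hbs, fix t hat hbt, Equiv.swap_apply_right]

theorem List.infix_range' {s n k : ℕ} (hsk : s ≤ k) (hkn : k + 2 ≤ s + n) :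
    [k, k + 1] <:+: List.range' s n := by
  refine ⟨List.range' s (k - s), List.range' (k + 2) (s + n - (k + 2)), ?_⟩
  have h₁ := List.range'_append_1 (s := s) (m := k - s) (n := 2)
  have h₂ := List.range'_append_1 (s := s) (m := k - s + 2) (n := s + n - (k + 2))
  rw [show s + (k - s) = k by omega] at h₁
  rw [show s + (k - s + 2) = k + 2 by omega, show k - s + 2 + (s + n - (k + 2)) = n by omega] at h₂
  rw [show [k, k + 1] = List.range' k 2 by simp [List.range'_succ], h₁, h₂]

theorem tcard_ofList {l l' : List ℕ} {i : ℕ} (h : l.erase i ≠ []) (h' : l'.erase i ≠ []) :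
    tcard (LTree.ofList l, LTree.ofList l') i =
      (LTree.ofList (l.erase i), LTree.ofList (l'.erase i)) := by
  simp [tcard, LTree.del_ofList i h, LTree.del_ofList i h']

theorem matchedAt_ofList_append {P l l' : List ℕ} {j : ℕ} (hj : 1 ≤ j) (hjP : j ≤ P.length) :
    matchedAt (LTree.ofList (P ++ l), LTree.ofList (P ++ l')) j := by
  have hP : P ≠ [] := List.ne_nil_of_length_pos (by omega)
  refine ⟨P[j - 1], ?_, ?_⟩ <;>
  · rw [catList_ofList (by simp [hP]), List.getElem?_append_left (by omega),
      List.getElem?_eq_getElem]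

theorem not_matchedAt_ofList_append {P l l' : List ℕ} {a a' : ℕ} (ha : a ≠ a') :
    ¬ matchedAt (LTree.ofList (P ++ a :: l), LTree.ofList (P ++ a' :: l')) (P.length + 1) := by
  rintro ⟨b, hb, hb'⟩
  rw [catList_ofList (by simp), Nat.add_sub_cancel, List.getElem?_append_right le_rfl,
    Nat.sub_self, List.getElem?_cons_zero, Option.some_inj] at hb hb'
  exact ha (hb.trans hb'.symm)

section CaterpillarTanglegram

variable {n m : ℕ} {σ : Equiv.Perm ℕ}

theorem tcard_lcat (hn : 2 ≤ n) (i : ℕ) :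
    tcard (lcat 1 n, (lcat 1 n).map σ) i =
      (LTree.ofList ((List.range' 1 n).erase i),
        LTree.ofList (((List.range' 1 n).map σ).erase i)) := by
  rw [lcat_eq_ofList 1 (by omega),
    LTree.map_ofList _ (by simp only [ne_eq, List.range'_eq_nil_iff]; omega)]
  exact tcard_ofList (List.erase_ne_nil_of_two_le_length _ (by simpa))
    (List.erase_ne_nil_of_two_le_length _ (by simpa))

theorem range'_eq_append (hmn : m ≤ n) :
    List.range' 1 n = List.range' 1 m ++ List.range' (m + 1) (n - m) := by
  rw [Nat.add_comm m 1, List.range'_append_1, Nat.add_sub_cancel' hmn]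

theorem map_range'_eq_append (hmatch : ∀ k, 1 ≤ k → k ≤ m → σ k = k) (hmn : m ≤ n) :
    (List.range' 1 n).map σ = List.range' 1 m ++ (List.range' (m + 1) (n - m)).map σ := by
  rw [range'_eq_append hmn, List.map_append, List.map_congr_left, List.map_id]
  intro k hk
  rw [List.mem_range'_1] at hk
  exact hmatch k hk.1 (by omega)

theorem tIso_tcard_succ (hmatch : ∀ k, 1 ≤ k → k ≤ m → σ k = k) (hmn : m < n) {k : ℕ}
    (hk : 1 ≤ k) (hkm : k < m) :
    TIso (tcard (lcat 1 n, (lcat 1 n).map σ) k) (tcard (lcat 1 n, (lcat 1 n).map σ) (k + 1)) := by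
  have hinf : [k, k + 1] <:+: List.range' 1 n := List.infix_range' hk (by omega)
  have hinfσ : [k, k + 1] <:+: (List.range' 1 n).map σ := by
    simpa [hmatch k hk hkm.le, hmatch (k + 1) (by omega) hkm] using hinf.map σ
  have hnodup : (List.range' 1 n).Nodup := List.nodup_range'
  have hlen : 2 ≤ (List.range' 1 n).length := by rw [List.length_range']; omega
  rw [tcard_lcat (by omega), tcard_lcat (by omega)]
  refine TIso.of_map_eq (Equiv.swap k (k + 1)) ?_ ?_
  · rw [LTree.map_ofList _ (List.erase_ne_nil_of_two_le_length _ hlen),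
      List.map_swap_erase_of_infix hnodup hinf]
  · rw [LTree.map_ofList _ (List.erase_ne_nil_of_two_le_length _ (by rwa [List.length_map])),
      List.map_swap_erase_of_infix (hnodup.map σ.injective) hinfσ]

theorem tIso_tcard (hmatch : ∀ k, 1 ≤ k → k ≤ m → σ k = k) (hmn : m < n) {k k' : ℕ}
    (hk : 1 ≤ k) (hkm : k ≤ m) (hk' : 1 ≤ k') (hk'm : k' ≤ m) :
    TIso (tcard (lcat 1 n, (lcat 1 n).map σ) k) (tcard (lcat 1 n, (lcat 1 n).map σ) k') := by
  have hfirst : ∀ k, 1 ≤ k → k ≤ m →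
      TIso (tcard (lcat 1 n, (lcat 1 n).map σ) 1) (tcard (lcat 1 n, (lcat 1 n).map σ) k) := by
    intro k hk
    induction k, hk using Nat.le_induction with
    | base => exact fun _ => TIso.refl _
    | succ k hk ih =>
      exact fun hkm => (ih (by omega)).trans (tIso_tcard_succ hmatch hmn hk (by omega))
  exact (hfirst k hk hkm).symm.trans (hfirst k' hk' hk'm)

theorem tcard_lcat_of_le (hmatch : ∀ k, 1 ≤ k → k ≤ m → σ k = k) (hmn : m < n) {k : ℕ}
    (hk : 1 ≤ k) (hkm : k ≤ m) :
    tcard (lcat 1 n, (lcat 1 n).map σ) k =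
      (LTree.ofList ((List.range' 1 m).erase k ++ List.range' (m + 1) (n - m)),
        LTree.ofList ((List.range' 1 m).erase k ++ (List.range' (m + 1) (n - m)).map σ)) := by
  have hkmem : k ∈ List.range' 1 m := List.mem_range'_1.2 ⟨hk, by omega⟩
  rw [tcard_lcat (by omega), map_range'_eq_append hmatch hmn.le, range'_eq_append hmn.le,
    List.erase_append_left _ hkmem, List.erase_append_left _ hkmem]

theorem matchedAt_tcard_of_le (hmatch : ∀ k, 1 ≤ k → k ≤ m → σ k = k) (hmn : m < n)
    {k j : ℕ} (hk : 1 ≤ k) (hkm : k ≤ m) (hj : 1 ≤ j) (hjm : j ≤ m - 1) :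
    matchedAt (tcard (lcat 1 n, (lcat 1 n).map σ) k) j := by
  rw [tcard_lcat_of_le hmatch hmn hk hkm]
  refine matchedAt_ofList_append hj ?_
  rw [List.length_erase_of_mem (List.mem_range'_1.2 ⟨hk, by omega⟩), List.length_range']
  exact hjm

theorem not_matchedAt_tcard (hmatch : ∀ k, 1 ≤ k → k ≤ m → σ k = k)
    (hmax : σ (m + 1) ≠ m + 1) (hmn : m < n) {k : ℕ} (hk : 1 ≤ k) (hkm : k ≤ m) :
    ¬ matchedAt (tcard (lcat 1 n, (lcat 1 n).map σ) k) m := by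
  have hlen : ((List.range' 1 m).erase k).length + 1 = m := by
    rw [List.length_erase_of_mem (List.mem_range'_1.2 ⟨hk, by omega⟩), List.length_range']
    omega
  have htail : List.range' (m + 1) (n - m) = (m + 1) :: List.range' (m + 1 + 1) (n - m - 1) := by
    rw [← List.range'_succ]
    congr 1
    omega
  have h := not_matchedAt_ofList_append (P := (List.range' 1 m).erase k)
    (l := List.range' (m + 1 + 1) (n - m - 1)) (l' := (List.range' (m + 1 + 1) (n - m - 1)).map σ)
    hmax.symm
  rwa [hlen, ← List.map_cons, ← htail, ← tcard_lcat_of_le hmatch hmn hk hkm] at h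

theorem matchedAt_tcard_of_lt (hmatch : ∀ k, 1 ≤ k → k ≤ m → σ k = k) {i j : ℕ} (hmi : m < i)
    (hin : i ≤ n) (hj : 1 ≤ j) (hjm : j ≤ m) :
    matchedAt (tcard (lcat 1 n, (lcat 1 n).map σ) i) j := by
  have himem : i ∉ List.range' 1 m := by simp only [List.mem_range'_1]; omega
  rw [tcard_lcat (by omega), map_range'_eq_append hmatch (by omega),
    range'_eq_append (m := m) (by omega), List.erase_append_right _ himem,
    List.erase_append_right _ himem]
  exact matchedAt_ofList_append hj (by simpa using hjm)

end CaterpillarTanglegram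

theorem caterpillar_caterpillar_card_structure_general (n m : ℕ) (σ : Equiv.Perm ℕ)
    (hm : m < n - 1)
    (hmatch : ∀ k, 1 ≤ k → k ≤ m → σ k = k)
    (hmax : σ (m + 1) ≠ m + 1) :
    ∀ T : LTree × LTree, T = (lcat 1 n, (lcat 1 n).map σ) →
      (∀ k k', 1 ≤ k → k ≤ m → 1 ≤ k' → k' ≤ m → TIso (tcard T k) (tcard T k')) ∧
      (∀ k, 1 ≤ k → k ≤ m →
        (∀ j, 1 ≤ j → j ≤ m - 1 → matchedAt (tcard T k) j) ∧ ¬ matchedAt (tcard T k) m) ∧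
      (∀ i, m < i → i ≤ n → ∀ j, 1 ≤ j → j ≤ m → matchedAt (tcard T i) j) := by
  rintro T rfl
  have hmn : m < n := by omega
  exact ⟨fun k k' hk hkm hk' hk'm => tIso_tcard hmatch hmn hk hkm hk' hk'm,
    fun k hk hkm => ⟨fun j hj hjm => matchedAt_tcard_of_le hmatch hmn hk hkm hj hjm,
      not_matchedAt_tcard hmatch hmax hmn hk hkm⟩,
    fun i hmi hin j hj hjm => matchedAt_tcard_of_lt hmatch hmi hin hj hjm⟩

/-- Let T = (C_n, C_n, σ) with n ≥ 5, both trees caterpillars with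
distance-to-root labelings v_1,…,v_n and u_1,…,u_n (the left tree is `lcat 1 n` and the right
tree is `lcat 1 n` relabeled by the permutation σ, so that v_{σ i} is matched to u_i).
Suppose v_k is matched to u_k for all 1 ≤ k ≤ m, with 1 ≤ m < n - 1 maximal (v_{m+1} is not
matched to u_{m+1}). Then the m cards T - v_k u_k (1 ≤ k ≤ m) are pairwise isomorphic
tanglegrams in which v'_j is matched to u'_j for 1 ≤ j ≤ m - 1 but v'_m is not matched to
u'_m, and in each of the remaining n - m cards v'_j is matched to u'_j for all 1 ≤ j ≤ m. -/
theorem caterpillar_caterpillar_card_structure (n m : ℕ) (σ : Equiv.Perm ℕ) (hn : 5 ≤ n)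
    (hσ : ∀ k ∈ Finset.Icc 1 n, σ k ∈ Finset.Icc 1 n)
    (hm1 : 1 ≤ m) (hm : m < n - 1)
    (hmatch : ∀ k, 1 ≤ k → k ≤ m → σ k = k)
    (hmax : σ (m + 1) ≠ m + 1) :
    ∀ T : LTree × LTree, T = (lcat 1 n, (lcat 1 n).map σ) →
      (∀ k k', 1 ≤ k → k ≤ m → 1 ≤ k' → k' ≤ m → TIso (tcard T k) (tcard T k')) ∧
      (∀ k, 1 ≤ k → k ≤ m →
        (∀ j, 1 ≤ j → j ≤ m - 1 → matchedAt (tcard T k) j) ∧ ¬ matchedAt (tcard T k) m) ∧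
      (∀ i, m < i → i ≤ n → ∀ j, 1 ≤ j → j ≤ m → matchedAt (tcard T i) j) :=
  caterpillar_caterpillar_card_structure_general n m σ hm hmatch hmax
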